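/- Let Θ ⊆ ℝ^m be an open convex set and ψ : Θ → ℝ a differentiable strictly convex function, and let φ(y) := sup_{θ ∈ Θ} (⟨θ, y⟩ − ψ(θ)) denote its Fenchel–Legendre conjugate. Then for every p ∈ Θ, φ is differentiable at y = ∇ψ(p) with ∇φ(∇ψ(p)) = p. Consequently, fixing θ_q ∈ Θ and defining h(y) := φ(y) + ψ(θ_q) − ⟨θ_q, y⟩ on the image ∇ψ(Θ), one has ∇h(∇ψ(p)) = p − θ_q for every p ∈ Θ; equivalently, θ_q = p − ∇h(∇ψ(p)), so a single gradient step of size 1 in the η-coordinates reaches the point whose θ-coordinate is θ_q. -/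

import Mathlib

/-!
Write `D(θ) = ψ θ - ψ p - ⟪∇ψ p, θ - p⟫` for the Bregman divergence at `p`. With `η = ∇ψ p`,
`⟪θ, η + v⟫ - ψ θ = (⟪p, η⟫ - ψ p) + ⟪p, v⟫ + (⟪θ - p, v⟫ - D θ)`, so
`φ(η + v) - φ η - ⟪p, v⟫` is squeezed between `0` (take `θ = p`) and `sup_θ (⟪θ - p, v⟫ - D θ)`.
Strict convexity makes `D` bounded below by some `c > 0` on the sphere of radius `ε` about `p`,
and convexity of `D` (with `D p = 0`) then gives `D θ ≥ (c / ε) ‖θ - p‖` outside that sphere.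
Hence the supremum is at most `ε ‖v‖` once `‖v‖ ≤ c / ε`, which is differentiability of `φ`
at `η` with gradient `p`. The function `h` differs from `φ` by an affine function.
-/

open scoped InnerProductSpace
open Metric Set Filter

variable {E : Type*} [NormedAddCommGroup E] [InnerProductSpace ℝ E]

/-- The Bregman divergence of `ψ` from `p` to `θ`, with `g` standing for `∇ψ p`. -/
def bregmanDiv (ψ : E → ℝ) (g p θ : E) : ℝ := ψ θ - ψ p - ⟪g, θ - p⟫_ℝ

@[simp] lemma bregmanDiv_self (ψ : E → ℝ) (g p : E) : bregmanDiv ψ g p p = 0 := by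
  simp [bregmanDiv]

lemma ConvexOn.convexOn_bregmanDiv {s : Set E} {ψ : E → ℝ} (hψ : ConvexOn ℝ s ψ) (g p : E) :
    ConvexOn ℝ s (bregmanDiv ψ g p) := by
  refine ⟨hψ.1, fun x hx y hy a b ha hb hab => ?_⟩
  have hlin : a • x + b • y - p = a • (x - p) + b • (y - p) := by
    linear_combination (norm := module) hab • p
  simp only [bregmanDiv, smul_eq_mul, hlin, inner_add_right, real_inner_smul_right]
  linear_combination hψ.2 hx hy ha hb hab + ψ p * hab

lemma ConvexOn.bregmanDiv_nonneg [CompleteSpace E] {s : Set E} {ψ : E → ℝ} {g p θ : E}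
    (hψ : ConvexOn ℝ s ψ) (hp : p ∈ s) (hθ : θ ∈ s) (hg : HasGradientAt ψ g p) :
    0 ≤ bregmanDiv ψ g p θ := by
  set L : ℝ →ᵃ[ℝ] E := AffineMap.lineMap p θ
  have hline : HasDerivAt (ψ ∘ L) ⟪g, θ - p⟫_ℝ 0 := by
    have hL : HasDerivAt L (θ - p) 0 := AffineMap.hasDerivAt_lineMap
    simpa [L] using hg.hasFDerivAt.comp_hasDerivAt_of_eq 0 hL (by simp [L])
  have hseg : ConvexOn ℝ (Icc 0 1) (ψ ∘ L) :=
    (hψ.comp_affineMap L).subset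
      (fun t ht => hψ.1.segment_subset hp hθ (by rw [segment_eq_image_lineMap]; exact ⟨t, ht, rfl⟩))
      (convex_Icc 0 1)
  have := hseg.le_slope_of_hasDerivAt (by simp) (by simp) zero_lt_one hline
  simp only [slope_def_field, Function.comp_apply, AffineMap.lineMap_apply_one,
    AffineMap.lineMap_apply_zero, sub_zero, div_one, L] at this
  simp only [bregmanDiv]
  linarith

lemma StrictConvexOn.bregmanDiv_pos [CompleteSpace E] {s : Set E} {ψ : E → ℝ} {g p θ : E}
    (hψ : StrictConvexOn ℝ s ψ) (hp : p ∈ s) (hθ : θ ∈ s) (hθp : θ ≠ p)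
    (hg : HasGradientAt ψ g p) : 0 < bregmanDiv ψ g p θ := by
  set w : E := (2⁻¹ : ℝ) • p + (2⁻¹ : ℝ) • θ
  have hw : w ∈ s := hψ.1 hp hθ (by norm_num) (by norm_num) (by norm_num)
  have hψw : ψ w < 2⁻¹ * ψ p + 2⁻¹ * ψ θ :=
    hψ.2 hp hθ hθp.symm (by norm_num) (by norm_num) (by norm_num)
  have hwp : w - p = (2⁻¹ : ℝ) • (θ - p) := by module
  have := hψ.convexOn.bregmanDiv_nonneg hp hw hg
  simp only [bregmanDiv, hwp, real_inner_smul_right] at this ⊢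
  linarith

lemma ConvexOn.mul_norm_sub_le_of_le_on_sphere {s : Set E} {D : E → ℝ} {p θ : E} {ε c : ℝ}
    (hD : ConvexOn ℝ s D) (hp : p ∈ s) (hDp : D p = 0) (hθ : θ ∈ s) (hε : 0 < ε)
    (hfar : ε ≤ ‖θ - p‖) (hc : ∀ x ∈ sphere p ε, c ≤ D x) :
    c * ‖θ - p‖ ≤ ε * D θ := by
  set t := ε / ‖θ - p‖
  have hnorm : 0 < ‖θ - p‖ := hε.trans_le hfar
  have ht0 : 0 ≤ t := by positivity
  have ht1 : t ≤ 1 := div_le_one_of_le₀ hfar hnorm.le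
  have hx : p + t • (θ - p) = (1 - t) • p + t • θ := by module
  have hsph : p + t • (θ - p) ∈ sphere p ε := by
    rw [mem_sphere_iff_norm, add_sub_cancel_left, norm_smul, Real.norm_of_nonneg ht0,
      div_mul_cancel₀ _ hnorm.ne']
  have hconv : D (p + t • (θ - p)) ≤ t * D θ := by
    simpa [hx, hDp] using hD.2 hp hθ (by linarith) ht0 (by ring)
  calc c * ‖θ - p‖ ≤ t * D θ * ‖θ - p‖ := by gcongr; exact (hc _ hsph).trans hconv
    _ = ε * D θ := by simp only [t]; field_simp

lemma StrictConvexOn.exists_inner_sub_bregmanDiv_le [ProperSpace E] {s : Set E} {ψ : E → ℝ}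
    {g p : E} {ε : ℝ} (hψ : StrictConvexOn ℝ s ψ) (hp : p ∈ s) (hg : HasGradientAt ψ g p)
    (hε : 0 < ε) (hsph : sphere p ε ⊆ s) (hcont : ContinuousOn ψ (sphere p ε)) :
    ∃ δ > 0, ∀ v : E, ‖v‖ ≤ δ → ∀ θ ∈ s, ⟪θ - p, v⟫_ℝ - bregmanDiv ψ g p θ ≤ ε * ‖v‖ := by
  obtain ⟨c, hc, hcD⟩ := (isCompact_sphere p ε).exists_forall_le' (a := 0)
    ((hcont.sub continuousOn_const).sub (by fun_prop))
    (fun x hx => hψ.bregmanDiv_pos hp (hsph hx) (ne_of_mem_sphere hx hε.ne') hg)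
  -- `δ = c / ε`: far from `p` the linear growth of the divergence beats `⟪θ - p, v⟫`.
  refine ⟨c / ε, by positivity, fun v hv θ hθ => ?_⟩
  have hD := hψ.convexOn.bregmanDiv_nonneg hp hθ hg
  have hcs : ⟪θ - p, v⟫_ℝ ≤ ‖θ - p‖ * ‖v‖ := real_inner_le_norm _ _
  rcases le_total ‖θ - p‖ ε with hnear | hfar
  · nlinarith [norm_nonneg v]
  · have hgrowth := (hψ.convexOn.convexOn_bregmanDiv g p).mul_norm_sub_le_of_le_on_sphere
      hp (bregmanDiv_self ψ g p) hθ hε hfar hcD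
    have : ‖θ - p‖ * ‖v‖ ≤ bregmanDiv ψ g p θ := by
      calc ‖θ - p‖ * ‖v‖ ≤ ‖θ - p‖ * (c / ε) := by gcongr
        _ ≤ bregmanDiv ψ g p θ := by rw [mul_div_assoc', div_le_iff₀ hε]; linarith
    nlinarith [norm_nonneg v]

/-- Where the supremum is infinite, `sSup` returns the junk value `0`; the lemmas below only
evaluate it where it is bounded. -/
noncomputable def conjugateOn (Θ : Set E) (ψ : E → ℝ) (y : E) : ℝ :=
  sSup ((fun θ => ⟪θ, y⟫_ℝ - ψ θ) '' Θ)

lemma conjugateOn_add_mem_Icc {Θ : Set E} {ψ : E → ℝ} {g p v : E} {B : ℝ} (hp : p ∈ Θ)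
    (hB : ∀ θ ∈ Θ, ⟪θ - p, v⟫_ℝ - bregmanDiv ψ g p θ ≤ B) :
    conjugateOn Θ ψ (g + v) ∈ Icc (⟪p, g + v⟫_ℝ - ψ p) (⟪p, g + v⟫_ℝ - ψ p + B) := by
  have hsplit : ∀ θ, ⟪θ, g + v⟫_ℝ - ψ θ
      = ⟪p, g + v⟫_ℝ - ψ p + (⟪θ - p, v⟫_ℝ - bregmanDiv ψ g p θ) := by
    intro θ
    simp only [bregmanDiv, inner_add_right, inner_sub_left, inner_sub_right, real_inner_comm g]
    ring
  have hub : ∀ a ∈ (fun θ => ⟪θ, g + v⟫_ℝ - ψ θ) '' Θ, a ≤ ⟪p, g + v⟫_ℝ - ψ p + B := by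
    rintro _ ⟨θ, hθ, rfl⟩
    linarith [hsplit θ, hB θ hθ]
  exact ⟨le_csSup ⟨_, hub⟩ ⟨p, hp, rfl⟩, csSup_le ⟨_, p, hp, rfl⟩ hub⟩

theorem StrictConvexOn.hasGradientAt_conjugateOn [FiniteDimensional ℝ E] {Θ : Set E}
    {ψ : E → ℝ} {g p : E} (hΘ : IsOpen Θ) (hψ : StrictConvexOn ℝ Θ ψ) (hp : p ∈ Θ)
    (hg : HasGradientAt ψ g p) : HasGradientAt (conjugateOn Θ ψ) p g := by
  have hφg : conjugateOn Θ ψ g = ⟪p, g⟫_ℝ - ψ p := by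
    have := conjugateOn_add_mem_Icc (v := 0) (B := 0) hp
      (fun θ hθ => by simpa using hψ.convexOn.bregmanDiv_nonneg hp hθ hg)
    simpa using this
  rw [hasGradientAt_iff_isLittleO_nhds_zero, Asymptotics.isLittleO_iff]
  intro C hC
  obtain ⟨r, hr, hball⟩ := nhds_basis_closedBall.mem_iff.1 (hΘ.mem_nhds hp)
  have hsph : sphere p (min C r) ⊆ Θ :=
    sphere_subset_closedBall.trans ((closedBall_subset_closedBall (min_le_right C r)).trans hball)
  obtain ⟨δ, hδ, hest⟩ := hψ.exists_inner_sub_bregmanDiv_le hp hg (lt_min hC hr) hsph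
    ((hψ.convexOn.continuousOn hΘ).mono hsph)
  filter_upwards [closedBall_mem_nhds 0 hδ] with v hv
  rw [mem_closedBall_zero_iff] at hv
  obtain ⟨hlo, hhi⟩ := conjugateOn_add_mem_Icc hp (hest v hv)
  rw [Real.norm_eq_abs, abs_le, hφg]
  rw [inner_add_right] at hlo hhi
  constructor <;> nlinarith [min_le_left C r, norm_nonneg v]

theorem HasGradientAt.add_const_sub_inner [CompleteSpace E] {f : E → ℝ} {g x : E}
    (hf : HasGradientAt f g x) (c : ℝ) (a : E) :
    HasGradientAt (fun y => f y + c - ⟪a, y⟫_ℝ) (g - a) x := by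
  rw [hasGradientAt_iff_isLittleO] at hf ⊢
  convert hf using 2 with y
  simp only [inner_sub_left, inner_sub_right]
  ring

theorem legendre_dual_divergence_one_step_general {m : ℕ}
    (Θ : Set (EuclideanSpace ℝ (Fin m))) (hΘopen : IsOpen Θ)
    (ψ : EuclideanSpace ℝ (Fin m) → ℝ)
    (hψdiff : DifferentiableOn ℝ ψ Θ) (hψconv : StrictConvexOn ℝ Θ ψ)
    (φ : EuclideanSpace ℝ (Fin m) → ℝ)
    (hφ : ∀ y, φ y = sSup ((fun θ => ⟪θ, y⟫_ℝ - ψ θ) '' Θ))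
    (θq : EuclideanSpace ℝ (Fin m))
    (h : EuclideanSpace ℝ (Fin m) → ℝ)
    (hh : ∀ y, h y = φ y + ψ θq - ⟪θq, y⟫_ℝ) :
    ∀ p ∈ Θ,
      HasGradientAt φ p (gradient ψ p) ∧
      HasGradientAt h (p - θq) (gradient ψ p) := by
  intro p hp
  obtain rfl : φ = conjugateOn Θ ψ := funext hφ
  obtain rfl : h = fun y => conjugateOn Θ ψ y + ψ θq - ⟪θq, y⟫_ℝ := funext hh
  have hgrad : HasGradientAt ψ (gradient ψ p) p :=
    (hψdiff.differentiableAt (hΘopen.mem_nhds hp)).hasGradientAt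
  have hconj := hψconv.hasGradientAt_conjugateOn hΘopen hp hgrad
  exact ⟨hconj, hconj.add_const_sub_inner _ _⟩

/-- Dual form of Theorem 1 / Corollary 1: let `φ` be the Fenchel–Legendre conjugate of a
differentiable strictly convex function `ψ` on an open convex set `Θ ⊆ ℝ^m`.  Then for
every `p ∈ Θ`, `φ` has gradient `p` at `y = ∇ψ(p)`; consequently, for a fixed `θ_q ∈ Θ`
and `h(y) = φ(y) + ψ(θ_q) − ⟨θ_q, y⟩`, the gradient of `h` at `∇ψ(p)` is `p − θ_q`,
so a single gradient step of size 1 in the η-coordinates reaches the point with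
θ-coordinate `θ_q`. -/
theorem legendre_dual_divergence_one_step {m : ℕ}
    (Θ : Set (EuclideanSpace ℝ (Fin m))) (hΘopen : IsOpen Θ) (hΘconv : Convex ℝ Θ)
    (ψ : EuclideanSpace ℝ (Fin m) → ℝ)
    (hψdiff : DifferentiableOn ℝ ψ Θ) (hψconv : StrictConvexOn ℝ Θ ψ)
    (φ : EuclideanSpace ℝ (Fin m) → ℝ)
    (hφ : ∀ y, φ y = sSup ((fun θ => ⟪θ, y⟫_ℝ - ψ θ) '' Θ))
    (θq : EuclideanSpace ℝ (Fin m)) (hθq : θq ∈ Θ)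
    (h : EuclideanSpace ℝ (Fin m) → ℝ)
    (hh : ∀ y, h y = φ y + ψ θq - ⟪θq, y⟫_ℝ) :
    ∀ p ∈ Θ,
      HasGradientAt φ p (gradient ψ p) ∧
      HasGradientAt h (p - θq) (gradient ψ p) :=
  legendre_dual_divergence_one_step_general Θ hΘopen ψ hψdiff hψconv φ hφ θq h hh
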